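/- The diagonal Fradkin integrals pairwise Poisson-commute: for all i, j ∈ {1,…,N}, {I_{ii}, I_{jj}} = 0, where I_{kk}(q,p) = pₖ² − (2λ H_λ(q,p) − ω²) qₖ². -/

import Mathlib

/-!
Write `I_kk = p_k² - g q_k²` with `g = 2λH_λ - ω² = (λ|p|² - ω²)/(1 + λ|q|²)`. In each
summand of `{I_ii, I_jj}` the terms quadratic in the derivatives of `g` cancel, and what is
left is a multiple of `p_k ∂g/∂q_k + q_k g ∂g/∂p_k`. This vanishes because
`∂g/∂q_k = -2λ q_k g/(1 + λ|q|²)` and `∂g/∂p_k = 2λ p_k/(1 + λ|q|²)`.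
-/

open Filter Topology

noncomputable def Hlam {N : ℕ} (lam om : ℝ) (q p : Fin N → ℝ) : ℝ :=
  ((∑ i, p i ^ 2) + om ^ 2 * ∑ i, q i ^ 2) / (2 * (1 + lam * ∑ i, q i ^ 2))

noncomputable def pbracket {N : ℕ} (F G : (Fin N → ℝ) → (Fin N → ℝ) → ℝ)
    (q p : Fin N → ℝ) : ℝ :=
  ∑ k, (deriv (fun t => F (Function.update q k t) p) (q k)
          * deriv (fun t => G q (Function.update p k t)) (p k)
        - deriv (fun t => F q (Function.update p k t)) (p k)
          * deriv (fun t => G (Function.update q k t) p) (q k))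

open Function

section

variable {N : ℕ}

theorem hasDerivAt_update_apply (x : Fin N → ℝ) (k i : Fin N) :
    HasDerivAt (fun t => update x k t i) ((Pi.single k 1 : Fin N → ℝ) i) (x k) :=
  hasDerivAt_pi.mp (hasDerivAt_update x k (x k)) i

theorem hasDerivAt_sum_update_sq (x : Fin N → ℝ) (k : Fin N) :
    HasDerivAt (fun t => ∑ m, update x k t m ^ 2) (2 * x k) (x k) := by
  refine (HasDerivAt.fun_sum (u := Finset.univ)
    fun m _ => (hasDerivAt_update_apply x k m).fun_pow 2).congr_deriv ?_
  simp [Pi.single_apply]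

theorem hasDerivAt_Hlam_update_q (lam om : ℝ) (q p : Fin N → ℝ) (k : Fin N)
    (h : 1 + lam * ∑ m, q m ^ 2 ≠ 0) :
    HasDerivAt (fun t => Hlam lam om (update q k t) p)
      (q k * (om ^ 2 - lam * ∑ m, p m ^ 2) / (1 + lam * ∑ m, q m ^ 2) ^ 2) (q k) := by
  have hQ := hasDerivAt_sum_update_sq q k
  have hD : 2 * (1 + lam * ∑ m, update q k (q k) m ^ 2) ≠ 0 := by
    simpa using mul_ne_zero two_ne_zero h
  refine (((hQ.const_mul (om ^ 2)).const_add _).div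
    ((hQ.const_mul lam).const_add 1 |>.const_mul 2) hD).congr_deriv ?_
  simp only [update_eq_self]
  field_simp
  ring

theorem hasDerivAt_Hlam_update_p (lam om : ℝ) (q p : Fin N → ℝ) (k : Fin N)
    (h : 1 + lam * ∑ m, q m ^ 2 ≠ 0) :
    HasDerivAt (fun t => Hlam lam om q (update p k t))
      (p k / (1 + lam * ∑ m, q m ^ 2)) (p k) := by
  refine (((hasDerivAt_sum_update_sq p k).add_const _).div_const _).congr_deriv ?_
  field_simp

variable {g : (Fin N → ℝ) → (Fin N → ℝ) → ℝ} {q p : Fin N → ℝ} {k : Fin N}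

theorem hasDerivAt_diagonal_update_q {g' : ℝ}
    (hg : HasDerivAt (fun t => g (update q k t) p) g' (q k)) (i : Fin N) :
    HasDerivAt (fun t => p i ^ 2 - g (update q k t) p * update q k t i ^ 2)
      (-(g' * q i ^ 2 + g q p * (2 * q i * (Pi.single k 1 : Fin N → ℝ) i))) (q k) := by
  refine ((hg.mul ((hasDerivAt_update_apply q k i).fun_pow 2)).const_sub _).congr_deriv ?_
  simp only [update_eq_self]
  ring

theorem hasDerivAt_diagonal_update_p {g' : ℝ}
    (hg : HasDerivAt (fun t => g q (update p k t)) g' (p k)) (i : Fin N) :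
    HasDerivAt (fun t => update p k t i ^ 2 - g q (update p k t) * q i ^ 2)
      (2 * p i * (Pi.single k 1 : Fin N → ℝ) i - g' * q i ^ 2) (p k) := by
  refine (((hasDerivAt_update_apply p k i).fun_pow 2).sub (hg.mul_const _)).congr_deriv ?_
  simp only [update_eq_self]
  ring

theorem pbracket_diagonal_eq_zero (gq gp : Fin N → ℝ)
    (hgq : ∀ k, HasDerivAt (fun t => g (update q k t) p) (gq k) (q k))
    (hgp : ∀ k, HasDerivAt (fun t => g q (update p k t)) (gp k) (p k))
    (hkey : ∀ k, p k * gq k + q k * g q p * gp k = 0) (i j : Fin N) :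
    pbracket (fun q p => p i ^ 2 - g q p * q i ^ 2) (fun q p => p j ^ 2 - g q p * q j ^ 2)
      q p = 0 := by
  refine Finset.sum_eq_zero fun k _ => ?_
  rw [(hasDerivAt_diagonal_update_q (hgq k) i).deriv,
    (hasDerivAt_diagonal_update_p (hgp k) j).deriv,
    (hasDerivAt_diagonal_update_p (hgp k) i).deriv,
    (hasDerivAt_diagonal_update_q (hgq k) j).deriv]
  rcases eq_or_ne k i with rfl | hi <;> rcases eq_or_ne k j with rfl | hj
  · ring
  · simp only [Pi.single_eq_same, Pi.single_eq_of_ne hj.symm]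
    linear_combination (2 * q j ^ 2) * hkey k
  · simp only [Pi.single_eq_same, Pi.single_eq_of_ne hi.symm]
    linear_combination (-2 * q i ^ 2) * hkey k
  · simp only [Pi.single_eq_of_ne hi.symm, Pi.single_eq_of_ne hj.symm]
    ring

end

theorem stmt_4 {N : ℕ} (lam om : ℝ) (i j : Fin N) (q p : Fin N → ℝ)
    (h : 1 + lam * ∑ k, q k ^ 2 ≠ 0) :
    pbracket
      (fun q p => p i ^ 2 - (2 * lam * Hlam lam om q p - om ^ 2) * q i ^ 2)
      (fun q p => p j ^ 2 - (2 * lam * Hlam lam om q p - om ^ 2) * q j ^ 2)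
      q p = 0 := by
  refine pbracket_diagonal_eq_zero (g := fun q p => 2 * lam * Hlam lam om q p - om ^ 2)
    _ _ (fun k => ((hasDerivAt_Hlam_update_q lam om q p k h).const_mul _).sub_const _)
    (fun k => ((hasDerivAt_Hlam_update_p lam om q p k h).const_mul _).sub_const _) ?_ i j
  intro k
  simp only [Hlam]
  field_simp
  ring
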